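/- Let x ∈ C_n(q,d,m,r) with d ≥ 2, m ≥ w_{n+1}, and 0 ≤ r < m, and let x′ be obtained from x by deleting c ≤ d symbols. Then the moment of x satisfies: if M(x′) > r then M(x) = r + m, and if M(x′) ≤ r then M(x) = r. -/

import Mathlib

/-- Weight sequence: `W p d i` = w_i(q,d) where p = q-1; w_i = 0 for i ≤ 0 (encoded by
ℕ truncated subtraction together with `W p d 0 = 0`), and w_i = 1 + p·∑_{j=1}^d w_{i-j}
for i ≥ 1. -/
def W (p d : ℕ) : ℕ → ℕ
  | 0 => 0
  | (i+1) => 1 + p * ∑ j ∈ Finset.range d, W p d (i - j)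
decreasing_by exact Nat.lt_succ_of_le (Nat.sub_le i j)

/-- Moment of a word (1-indexed): M(x) = ∑_{i=1}^{n} w_i x_i. -/
def moment (w : ℕ → ℕ) (x : List ℕ) : ℕ :=
  ∑ i ∈ Finset.range x.length, w (i + 1) * x.getD i 0

/-- Deleted word x^{(D)}: delete the symbols at the (1-indexed) positions in D,
keeping the remaining symbols in order. -/
def deleteD (x : List ℕ) (D : Finset ℕ) : List ℕ :=
  ((List.range x.length).filter (fun i => (i + 1) ∉ D)).map (fun i => x.getD i 0)

/-!
Deleting symbols moves every surviving symbol to a position of smaller weight, so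
`M(x') ≤ M(x)`. The same applied to the complemented word `p - x` gives
`M(x) - M(x') ≤ p (S n - S (n - c))`, where `S k = w₁ + ⋯ + wₖ`, and the recursion
`p (S n - S (n - d)) = w_{n+1} - 1` makes this smaller than `w_{n+1} ≤ m`. Together with
`M(x) ≤ p S n < 2 w_{n+1} ≤ 2 m`, the congruence `M(x) ≡ r` leaves only `M(x) ∈ {r, r + m}`,
and comparing `M(x')` with `r` decides between the two.
-/

lemma W_zero (p d : ℕ) : W p d 0 = 0 := by rw [W]

lemma W_succ (p d i : ℕ) : W p d (i + 1) = 1 + p * ∑ j ∈ Finset.range d, W p d (i - j) := by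
  rw [W]

lemma W_monotone (p d : ℕ) : Monotone (W p d) := by
  refine monotone_nat_of_le_succ fun i => ?_
  induction i using Nat.strong_induction_on with
  | _ i ih =>
    cases i with
    | zero => simp [W_zero]
    | succ i =>
      rw [W_succ, W_succ]
      gcongr with j
      rcases Nat.lt_or_ge i j with h | h
      · simp [Nat.sub_eq_zero_of_le h.le, W_zero]
      · rw [show i + 1 - j = i - j + 1 by omega]
        exact ih (i - j) (by omega)

lemma one_add_mul_W_add_W_le (p d i : ℕ) (hd : 2 ≤ d) :
    1 + p * (W p d (i + 1) + W p d i) ≤ W p d (i + 2) := by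
  rw [W_succ p d (i + 1)]
  have hsub : ({0, 1} : Finset ℕ) ⊆ Finset.range d := by
    intro j hj
    simp only [Finset.mem_insert, Finset.mem_singleton] at hj
    simp only [Finset.mem_range]
    omega
  have hpair := Finset.sum_le_sum_of_subset (f := fun j => W p d (i + 1 - j)) hsub
  rw [Finset.sum_pair zero_ne_one] at hpair
  simp only [Nat.sub_zero, Nat.add_sub_cancel] at hpair
  gcongr

def weightSum (w : ℕ → ℕ) (n : ℕ) : ℕ := ∑ i ∈ Finset.range n, w (i + 1)

lemma weightSum_succ' (w : ℕ → ℕ) (n : ℕ) :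
    weightSum w (n + 1) = w 1 + weightSum (fun i => w (i + 1)) n := by
  rw [weightSum, Finset.sum_range_succ', add_comm]
  rfl

lemma weightSum_monotone (w : ℕ → ℕ) : Monotone (weightSum w) :=
  fun _ _ h => Finset.sum_le_sum_of_subset (Finset.range_subset_range.mpr h)

lemma weightSum_eq_weightSum_sub_add (w : ℕ → ℕ) (hw : w 0 = 0) (n k : ℕ) :
    weightSum w n = weightSum w (n - k) + ∑ j ∈ Finset.range k, w (n - j) := by
  induction k with
  | zero => simp
  | succ k ih =>
    have hstep : weightSum w (n - k) = weightSum w (n - (k + 1)) + w (n - k) := by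
      rcases Nat.lt_or_ge k n with h | h
      · obtain ⟨t, ht⟩ : ∃ t, n - k = t + 1 := ⟨n - k - 1, by omega⟩
        rw [ht, show n - (k + 1) = t by omega, weightSum, Finset.sum_range_succ]
        rfl
      · simp [Nat.sub_eq_zero_of_le h, Nat.sub_eq_zero_of_le (Nat.le_succ_of_le h), hw]
    rw [ih, hstep, Finset.sum_range_succ]
    ring

lemma mul_weightSum_add_one (p d n : ℕ) :
    p * weightSum (W p d) n + 1 = p * weightSum (W p d) (n - d) + W p d (n + 1) := by
  rw [weightSum_eq_weightSum_sub_add _ (W_zero p d) n d, W_succ]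
  ring

lemma mul_weightSum_lt_W_add_two (p d : ℕ) (hp : 1 ≤ p) (hd : 2 ≤ d) (k : ℕ) :
    p * weightSum (W p d) k < W p d (k + 2) := by
  induction k with
  | zero => simp [weightSum, W_succ]
  | succ k ih =>
    have hW : W p d (k + 2) ≤ p * W p d (k + 2) := Nat.le_mul_of_pos_left _ hp
    have hrec := one_add_mul_W_add_W_le p d (k + 1) hd
    rw [weightSum, Finset.sum_range_succ, ← weightSum]
    linarith

lemma mul_weightSum_lt_two_mul_W (p d : ℕ) (hp : 1 ≤ p) (hd : 2 ≤ d) (n : ℕ) :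
    p * weightSum (W p d) n < 2 * W p d (n + 1) := by
  rcases n with _ | n
  · simp [weightSum, W_succ]
  have h := mul_weightSum_add_one p d (n + 1)
  have hlt := mul_weightSum_lt_W_add_two p d hp hd (n + 1 - d)
  have hle := W_monotone p d (show n + 1 - d + 2 ≤ n + 1 + 1 by omega)
  omega

lemma moment_cons (w : ℕ → ℕ) (a : ℕ) (l : List ℕ) :
    moment w (a :: l) = w 1 * a + moment (fun i => w (i + 1)) l := by
  rw [moment, moment, List.length_cons, Finset.sum_range_succ', add_comm]
  rfl

lemma moment_le_moment_of_le {w w' : ℕ → ℕ} (h : ∀ i, w i ≤ w' i) (l : List ℕ) :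
    moment w l ≤ moment w' l :=
  Finset.sum_le_sum fun _ _ => Nat.mul_le_mul_right _ (h _)

lemma List.Sublist.moment_le {l₁ l₂ : List ℕ} (h : l₁.Sublist l₂) {w : ℕ → ℕ}
    (hw : Monotone w) : moment w l₁ ≤ moment w l₂ := by
  induction h generalizing w with
  | slnil => rfl
  | @cons l₁ l₂ a _ ih =>
    calc moment w l₁ ≤ moment (fun i => w (i + 1)) l₂ :=
          (ih hw).trans (moment_le_moment_of_le (fun i => hw i.le_succ) _)
      _ ≤ moment w (a :: l₂) := by rw [moment_cons]; exact Nat.le_add_left _ _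
  | cons_cons a _ ih =>
    rw [moment_cons, moment_cons]
    exact Nat.add_le_add_left (ih fun _ _ h => hw (Nat.succ_le_succ h)) _

lemma moment_map_sub_add_moment (w : ℕ → ℕ) (p : ℕ) (l : List ℕ) (hl : ∀ a ∈ l, a ≤ p) :
    moment w (l.map (p - ·)) + moment w l = p * weightSum w l.length := by
  induction l generalizing w with
  | nil => simp [moment, weightSum]
  | cons a l ih =>
    have ha : w 1 * (p - a) + w 1 * a = p * w 1 := by
      rw [← mul_add, Nat.sub_add_cancel (hl a List.mem_cons_self), mul_comm]
    have ih' := ih (fun i => w (i + 1)) fun b hb => hl b (List.mem_cons_of_mem a hb)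
    rw [List.map_cons, moment_cons, moment_cons, List.length_cons, weightSum_succ', mul_add]
    linarith

lemma deleteD_sublist (x : List ℕ) (D : Finset ℕ) : (deleteD x D).Sublist x := by
  have : x = (List.range x.length).map (fun i => x.getD i 0) := by
    apply List.ext_getElem (by simp)
    intro i h _
    simp [h]
  conv_rhs => rw [this]
  exact List.filter_sublist.map _

lemma length_le_length_deleteD_add_card (x : List ℕ) (D : Finset ℕ) :
    x.length ≤ (deleteD x D).length + D.card := by
  set removed := ((List.range x.length).filter (fun i => (i + 1) ∈ D)).map (· + 1)
  have hnodup : removed.Nodup := (List.nodup_range.filter _).map (add_left_injective 1)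
  have hsub : removed.toFinset ⊆ D := by
    intro j hj
    simp only [removed, List.mem_toFinset, List.mem_map, List.mem_filter] at hj
    obtain ⟨i, ⟨_, hi⟩, rfl⟩ := hj
    simpa using hi
  have hcard := Finset.card_le_card hsub
  rw [List.toFinset_card_of_nodup hnodup, List.length_map] at hcard
  have hsplit := List.length_eq_length_filter_add (l := List.range x.length)
    (fun i => decide (i + 1 ∉ D))
  simp only [List.length_range, decide_not, Bool.not_not] at hsplit
  simp only [deleteD, List.length_map, decide_not]
  omega

lemma moment_le_mul_weightSum (w : ℕ → ℕ) (p : ℕ) (l : List ℕ) (hl : ∀ a ∈ l, a ≤ p) :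
    moment w l ≤ p * weightSum w l.length :=
  moment_map_sub_add_moment w p l hl ▸ Nat.le_add_left _ _

lemma moment_lt_two_mul_W (p d : ℕ) (hp : 1 ≤ p) (hd : 2 ≤ d) (x : List ℕ)
    (hx : ∀ a ∈ x, a ≤ p) : moment (W p d) x < 2 * W p d (x.length + 1) :=
  (moment_le_mul_weightSum _ p x hx).trans_lt (mul_weightSum_lt_two_mul_W p d hp hd _)

lemma moment_lt_moment_deleteD_add_W (p d : ℕ) (x : List ℕ) (hx : ∀ a ∈ x, a ≤ p)
    (D : Finset ℕ) (hD : D.card ≤ d) :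
    moment (W p d) x < moment (W p d) (deleteD x D) + W p d (x.length + 1) := by
  set x' := deleteD x D
  have hsub : x'.Sublist x := deleteD_sublist x D
  have hcompl := (hsub.map (p - ·)).moment_le (W_monotone p d)
  have hx'compl := moment_map_sub_add_moment (W p d) p x' fun a ha => hx a (hsub.subset ha)
  have hxcompl := moment_map_sub_add_moment (W p d) p x hx
  have hlen : x.length ≤ x'.length + D.card := length_le_length_deleteD_add_card x D
  have hS := Nat.mul_le_mul_left p
    (weightSum_monotone (W p d) (show x.length - d ≤ x'.length by omega))
  have hW := mul_weightSum_add_one p d x.length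
  omega

lemma eq_or_eq_add_of_mod_eq_of_lt_two_mul {a m r : ℕ} (h : a % m = r) (ha : a < 2 * m) :
    a = r ∨ a = r + m := by
  have hdiv := Nat.div_add_mod a m
  have hquot : a / m < 2 := (Nat.div_lt_iff_lt_mul (by omega)).2 (by omega)
  interval_cases a / m <;> omega

theorem moment_determined_general (q d n m r c : ℕ) (hq : 2 ≤ q) (hd : 2 ≤ d)
    (hm : W (q - 1) d (n + 1) ≤ m)
    (x : List ℕ) (hlen : x.length = n) (hx : ∀ a ∈ x, a < q)
    (hcode : moment (W (q - 1) d) x % m = r)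
    (D : Finset ℕ) (hcard : D.card = c) (hc : c ≤ d) :
    (r < moment (W (q - 1) d) (deleteD x D) → moment (W (q - 1) d) x = r + m) ∧
    (moment (W (q - 1) d) (deleteD x D) ≤ r → moment (W (q - 1) d) x = r) := by
  subst hlen
  have hx' : ∀ a ∈ x, a ≤ q - 1 := fun a ha => Nat.le_sub_one_of_lt (hx a ha)
  have hdel_le := (deleteD_sublist x D).moment_le (W_monotone (q - 1) d)
  have hdel_gap := moment_lt_moment_deleteD_add_W (q - 1) d x hx' D (hcard ▸ hc)
  have hlt := moment_lt_two_mul_W (q - 1) d (by omega) hd x hx'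
  rcases eq_or_eq_add_of_mod_eq_of_lt_two_mul hcode (by omega) with h | h <;> omega

theorem moment_determined (q d n m r c : ℕ) (hq : 2 ≤ q) (hd : 2 ≤ d)
    (hm : W (q - 1) d (n + 1) ≤ m) (hr : r < m)
    (x : List ℕ) (hlen : x.length = n) (hx : ∀ a ∈ x, a < q)
    (hcode : moment (W (q - 1) d) x % m = r)
    (D : Finset ℕ) (hD : D ⊆ Finset.Icc 1 n) (hcard : D.card = c) (hc : c ≤ d) :
    (r < moment (W (q - 1) d) (deleteD x D) → moment (W (q - 1) d) x = r + m) ∧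
    (moment (W (q - 1) d) (deleteD x D) ≤ r → moment (W (q - 1) d) x = r) :=
  moment_determined_general q d n m r c hq hd hm x hlen hx hcode D hcard hc
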